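/- arXiv:1906.10565 — 4 statements merged into one kernel-verified Lean document; each statement's English description precedes it below -/
import Mathlib

section
/- Let x, y, z be complex numbers, not all zero. Then the complex dimension of (ker β)/(range α) equals 2, where α : ℂ → ℂ⁴, α(t) = (x t, y t, t, 0), and β : ℂ⁴ → ℂ, β(v) = -y v₁ + x v₂ + z v₄. -/
set_option synthInstance.maxHeartbeats 1000000 in
/-- For `(x,y,z) ≠ 0` in `ℂ³`, the cohomology `ker β / range α` of the monad
`ℂ →α ℂ⁴ →β ℂ`, with `α = (x,y,1,0)ᵗ` and `β = (-y,x,0,z)`, has complex dimension 2. -/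
theorem monad_cohomology_dim (x y z : ℂ) (h : (x, y, z) ≠ (0, 0, 0))
    (A : (Fin 1 → ℂ) →ₗ[ℂ] (Fin 4 → ℂ)) (hA : A = Matrix.toLin' !![x; y; 1; 0])
    (B : (Fin 4 → ℂ) →ₗ[ℂ] ℂ)
    (hB : B = (LinearMap.proj 0).comp (Matrix.toLin' !![-y, x, 0, z])) :
    Module.finrank ℂ
      (↥(LinearMap.ker B) ⧸ (LinearMap.range A).comap (LinearMap.ker B).subtype) = 2 := by
  have hBv : ∀ v : Fin 4 → ℂ, B v = -y * v 0 + x * v 1 + z * v 3 := by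
    subst hB; intro v
    simp [Matrix.toLin'_apply, Matrix.mulVec, dotProduct, Fin.sum_univ_four]
  have hAv : ∀ t : Fin 1 → ℂ, A t = ![x * t 0, y * t 0, t 0, 0] := by
    subst hA; intro t
    funext i
    fin_cases i <;>
      simp [Matrix.toLin'_apply, Matrix.mulVec, dotProduct, Fin.sum_univ_one]
  have hAinj : Function.Injective A := by
    intro s t hst
    rw [hAv s, hAv t] at hst
    have h2 := congrFun hst 2
    simp at h2
    funext i; fin_cases i; exact h2
  have hle : LinearMap.range A ≤ LinearMap.ker B := by
    rintro v ⟨t, rfl⟩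
    rw [LinearMap.mem_ker, hBv, hAv]
    simp; ring
  have hBne : B ≠ 0 := by
    have h' : ¬(x = 0 ∧ y = 0 ∧ z = 0) := by
      intro ⟨hx, hy, hz⟩; exact h (by simp [hx, hy, hz])
    intro hB0
    apply h'
    refine ⟨?_, ?_, ?_⟩
    · have := hBv (Pi.single 1 1); rw [hB0] at this; simpa using this.symm
    · have := hBv (Pi.single 0 1); rw [hB0] at this; simpa using this.symm
    · have := hBv (Pi.single 3 1); rw [hB0] at this; simpa using this.symm
  have hBsurj : Function.Surjective B := LinearMap.surjective_of_ne_zero hBne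
  have h1 : Module.finrank ℂ (LinearMap.range A) = 1 := by
    rw [LinearMap.finrank_range_of_inj hAinj]
    simp
  have h2 : Module.finrank ℂ (LinearMap.ker B) = 3 := by
    have hrn := LinearMap.finrank_range_add_finrank_ker B
    rw [LinearMap.range_eq_top.mpr hBsurj] at hrn
    simp at hrn
    have h4 : Module.finrank ℂ (Fin 4 → ℂ) = 4 := by simp
    omega
  have h3 : Module.finrank ℂ ((LinearMap.range A).comap (LinearMap.ker B).subtype) = 1 := by
    rw [(Submodule.comapSubtypeEquivOfLe hle).finrank_eq]
    exact h1
  have hq := Submodule.finrank_quotient_add_finrank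
    ((LinearMap.range A).comap (LinearMap.ker B).subtype)
  omega
end

section
/- For complex parameters a₁, a₂, b₁, b₂ satisfying the ADHM equations a₁b₁ + a₂b₂ = 0 and |a₁|² + |a₂|² = |b₁|² + |b₂|² > 0, and for every (x,y) ∈ ℂ², the map α : ℂ → ℂ⁴ given by α(t) = (x t, y t, a₁ t, a₂ t) is injective, the map β : ℂ⁴ → ℂ given by β(v) = -y v₁ + x v₂ + b₁ v₃ + b₂ v₄ is surjective, and β ∘ α = 0. -/
/-!
`α` is `t ↦ t • u` and `β` is `v ↦ c ⬝ᵥ v` for the vectors `u = (x, y, a₁, a₂)` and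
`c = (-y, x, b₁, b₂)`. A nonzero vector spans an injective line and a nonzero covector is onto,
and the positivity of `|a₁|² + |a₂|² = |b₁|² + |b₂|²` makes both `u` and `c` nonzero. Finally
`c ⬝ᵥ u = -y x + x y + b₁ a₁ + b₂ a₂` vanishes by the ADHM equation `a₁ b₁ + a₂ b₂ = 0`.
-/

open Matrix

theorem ne_zero_or_ne_zero_of_pos_sq_norm_add_sq_norm {E : Type*} [SeminormedAddGroup E]
    {a b : E} (h : 0 < ‖a‖ ^ 2 + ‖b‖ ^ 2) : a ≠ 0 ∨ b ≠ 0 := by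
  contrapose! h
  simp [h.1, h.2]

theorem Matrix.dotProduct_left_surjective {K ι : Type*} [DivisionRing K] [Fintype ι]
    [DecidableEq ι] {c : ι → K} (hc : c ≠ 0) : Function.Surjective (fun v : ι → K => c ⬝ᵥ v) := by
  obtain ⟨i, hi⟩ := Function.ne_iff.mp hc
  intro r
  exact ⟨Pi.single i ((c i)⁻¹ * r), by simp [dotProduct_single, mul_inv_cancel_left₀ hi]⟩

/-- For ADHM data `(a₁,a₂,b₁,b₂)` with `a₁b₁ + a₂b₂ = 0` and
`|a₁|² + |a₂|² = |b₁|² + |b₂|² > 0`, and any `(x,y) ∈ ℂ²`, the monad map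
`α = (x,y,a₁,a₂)ᵗ` is injective, `β = (-y,x,b₁,b₂)` is surjective, and `β ∘ α = 0`. -/
theorem adhm_monad (a₁ a₂ b₁ b₂ : ℂ)
    (hADHM : a₁ * b₁ + a₂ * b₂ = 0)
    (hnorm : ‖a₁‖ ^ 2 + ‖a₂‖ ^ 2
      = ‖b₁‖ ^ 2 + ‖b₂‖ ^ 2)
    (hpos : 0 < ‖a₁‖ ^ 2 + ‖a₂‖ ^ 2)
    (x y : ℂ) :
    Function.Injective (fun t : ℂ => ![x * t, y * t, a₁ * t, a₂ * t]) ∧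
    Function.Surjective (fun v : Fin 4 → ℂ => -y * v 0 + x * v 1 + b₁ * v 2 + b₂ * v 3) ∧
    (fun v : Fin 4 → ℂ => -y * v 0 + x * v 1 + b₁ * v 2 + b₂ * v 3) ∘
      (fun t : ℂ => ![x * t, y * t, a₁ * t, a₂ * t]) = 0 := by
  set u : Fin 4 → ℂ := ![x, y, a₁, a₂]
  set c : Fin 4 → ℂ := ![-y, x, b₁, b₂]
  have hα : (fun t : ℂ => ![x * t, y * t, a₁ * t, a₂ * t]) = fun t => t • u := by
    funext t i
    fin_cases i <;> simp [u, mul_comm]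
  have hβ : (fun v : Fin 4 → ℂ => -y * v 0 + x * v 1 + b₁ * v 2 + b₂ * v 3) = (c ⬝ᵥ ·) := by
    funext v
    simp [c, dotProduct, Fin.sum_univ_four]
  have hu : u ≠ 0 := by
    have := ne_zero_or_ne_zero_of_pos_sq_norm_add_sq_norm hpos
    simp only [u, ne_eq, cons_eq_zero_iff, empty_eq, and_true]
    tauto
  have hc : c ≠ 0 := by
    have := ne_zero_or_ne_zero_of_pos_sq_norm_add_sq_norm (hnorm ▸ hpos)
    simp only [c, ne_eq, cons_eq_zero_iff, empty_eq, and_true]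
    tauto
  have hcu : c ⬝ᵥ u = 0 := by
    simp only [c, u, dotProduct, Fin.sum_univ_four, cons_val_zero, cons_val_one, cons_val, neg_mul]
    linear_combination hADHM
  rw [hα, hβ]
  refine ⟨smul_left_injective ℂ hu, dotProduct_left_surjective hc, ?_⟩
  funext t
  simp [dotProduct_smul, hcu]
end

section
/- With notation as above, there is a constant C > 0 such that for all (x,y,z) ∈ ℂ³ with x ≠ 0 or y ≠ 0, and all s = (s₁,s₂,s₃,s₄) ∈ ℂ⁴ with βs = 0 and α^†s = 0, one has |s₁| + |s₂| ≤ C · min{(|𝐱|+1)^{1/2}, (|𝐱|+1)/(|x|+|y|)} · ‖s‖_h, where ‖s‖_h² = (|s₁|²+|s₂|²)(|𝐱|²+1)^{-1/2} + |s₃|² + |s₄|². -/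
/-!
Put `Q = (|𝐱|² + 1)^{1/2}`. The constraints say `x̄ s₁ + ȳ s₂ = -Q s₃` and `-y s₁ + x s₂ = -z s₄`,
and by Lagrange's identity the squared moduli of the two left-hand sides add up to
`(|x|² + |y|²)(|s₁|² + |s₂|²)`. Since `|z| ≤ Q`, this gives
`(|x|² + |y|²)(|s₁|² + |s₂|²) ≤ Q² ‖s‖_h²`, the source of the bound `(|𝐱|+1)/(|x|+|y|)`;
the bound `(|𝐱|+1)^{1/2}` comes from `|s₁|² + |s₂|² ≤ Q ‖s‖_h²` alone. Both follow with `C = 2`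
from `Q ≤ |𝐱| + 1` and `a + b ≤ √2 (a² + b²)^{1/2}`.
-/

open ComplexConjugate

theorem Complex.lagrange_identity (x y s₁ s₂ : ℂ) :
    ‖conj x * s₁ + conj y * s₂‖ ^ 2 + ‖-y * s₁ + x * s₂‖ ^ 2 =
      (‖x‖ ^ 2 + ‖y‖ ^ 2) * (‖s₁‖ ^ 2 + ‖s₂‖ ^ 2) := by
  simp only [Complex.sq_norm, Complex.normSq_apply, Complex.add_re, Complex.add_im,
    Complex.mul_re, Complex.mul_im, Complex.neg_re, Complex.neg_im, Complex.conj_re,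
    Complex.conj_im]
  ring

theorem Real.sqrt_add_one_le {t : ℝ} (ht : 0 ≤ t) : √(t + 1) ≤ √t + 1 := by
  rw [Real.sqrt_le_left (by positivity), add_sq, Real.sq_sqrt ht]
  nlinarith [Real.sqrt_nonneg t]

theorem add_le_sqrt_two_mul_sqrt (a b : ℝ) : a + b ≤ √2 * √(a ^ 2 + b ^ 2) := by
  rw [← Real.sqrt_mul zero_le_two]
  exact Real.le_sqrt_of_sq_le add_sq_le

theorem add_le_two_mul_sqrt_mul_of_sq_add_sq_le {a b ρ N : ℝ} (hN : 0 ≤ N)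
    (h : a ^ 2 + b ^ 2 ≤ ρ * N ^ 2) : a + b ≤ 2 * √ρ * N := by
  have hsqrt_two : √2 ≤ 2 := by
    rw [Real.sqrt_le_left zero_le_two]
    norm_num
  calc a + b ≤ √2 * √(a ^ 2 + b ^ 2) := add_le_sqrt_two_mul_sqrt a b
    _ ≤ √2 * √(ρ * N ^ 2) := by gcongr
    _ = √2 * √ρ * N := by rw [Real.sqrt_mul' _ (by positivity), Real.sqrt_sq hN, mul_assoc]
    _ ≤ 2 * √ρ * N := by gcongr

theorem add_le_two_mul_div_mul_of_mul_sq_add_sq_le {p q a b ρ N : ℝ} (hpq : 0 < p + q)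
    (ha : 0 ≤ a) (hb : 0 ≤ b) (hρ : 0 ≤ ρ) (hN : 0 ≤ N)
    (h : (p ^ 2 + q ^ 2) * (a ^ 2 + b ^ 2) ≤ (ρ * N) ^ 2) :
    a + b ≤ 2 * (ρ / (p + q)) * N := by
  have key : (p + q) * (a + b) ≤ 2 * (ρ * N) :=
    calc (p + q) * (a + b) ≤ (√2 * √(p ^ 2 + q ^ 2)) * (√2 * √(a ^ 2 + b ^ 2)) :=
          mul_le_mul (add_le_sqrt_two_mul_sqrt p q) (add_le_sqrt_two_mul_sqrt a b)
            (by positivity) (by positivity)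
      _ = 2 * √((p ^ 2 + q ^ 2) * (a ^ 2 + b ^ 2)) := by
          rw [Real.sqrt_mul (by positivity)]
          linear_combination (√(p ^ 2 + q ^ 2) * √(a ^ 2 + b ^ 2)) *
            Real.mul_self_sqrt zero_le_two
      _ ≤ 2 * √((ρ * N) ^ 2) := by gcongr
      _ = 2 * (ρ * N) := by rw [Real.sqrt_sq (by positivity)]
  rw [mul_div_assoc', div_mul_eq_mul_div, le_div_iff₀ hpq]
  linarith

noncomputable def hNorm (Q : ℝ) (s₁ s₂ s₃ s₄ : ℂ) : ℝ :=
  √((‖s₁‖ ^ 2 + ‖s₂‖ ^ 2) * Q⁻¹ + ‖s₃‖ ^ 2 + ‖s₄‖ ^ 2)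

theorem hNorm_nonneg (Q : ℝ) (s₁ s₂ s₃ s₄ : ℂ) : 0 ≤ hNorm Q s₁ s₂ s₃ s₄ :=
  Real.sqrt_nonneg _

theorem sq_add_sq_le_mul_sq_hNorm {Q : ℝ} (hQ : 0 < Q) (s₁ s₂ s₃ s₄ : ℂ) :
    ‖s₁‖ ^ 2 + ‖s₂‖ ^ 2 ≤ Q * hNorm Q s₁ s₂ s₃ s₄ ^ 2 := by
  rw [hNorm, Real.sq_sqrt (by positivity), mul_add, mul_add, mul_comm (_ + _) Q⁻¹,
    mul_inv_cancel_left₀ hQ.ne']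
  nlinarith [sq_nonneg ‖s₃‖, sq_nonneg ‖s₄‖]

theorem sq_add_sq_le_sq_hNorm {Q : ℝ} (hQ : 0 ≤ Q) (s₁ s₂ s₃ s₄ : ℂ) :
    ‖s₃‖ ^ 2 + ‖s₄‖ ^ 2 ≤ hNorm Q s₁ s₂ s₃ s₄ ^ 2 := by
  rw [hNorm, Real.sq_sqrt (by positivity)]
  linarith [show 0 ≤ (‖s₁‖ ^ 2 + ‖s₂‖ ^ 2) * Q⁻¹ by positivity]

section

variable {x y z s₁ s₂ s₃ s₄ : ℂ} {Q : ℝ}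

theorem norm_conj_mul_add_conj_mul_eq (hQ : 0 < Q)
    (hα : conj x * (Q⁻¹ : ℝ) * s₁ + conj y * (Q⁻¹ : ℝ) * s₂ + s₃ = 0) :
    ‖conj x * s₁ + conj y * s₂‖ = Q * ‖s₃‖ := by
  have hQ' : (Q : ℂ) ≠ 0 := Complex.ofReal_ne_zero.mpr hQ.ne'
  have h : conj x * s₁ + conj y * s₂ = Q * -s₃ := by
    push_cast at hα
    field_simp at hα
    linear_combination hα
  rw [h, norm_mul, Complex.norm_real, Real.norm_of_nonneg hQ.le, norm_neg]

theorem sq_add_sq_mul_sq_add_sq_le (hQ : 0 < Q) (hz : ‖z‖ ≤ Q)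
    (hβ : -y * s₁ + x * s₂ + z * s₄ = 0)
    (hα : conj x * (Q⁻¹ : ℝ) * s₁ + conj y * (Q⁻¹ : ℝ) * s₂ + s₃ = 0) :
    (‖x‖ ^ 2 + ‖y‖ ^ 2) * (‖s₁‖ ^ 2 + ‖s₂‖ ^ 2) ≤ Q ^ 2 * (‖s₃‖ ^ 2 + ‖s₄‖ ^ 2) := by
  have hβ' : ‖-y * s₁ + x * s₂‖ = ‖z‖ * ‖s₄‖ := by
    rw [eq_neg_of_add_eq_zero_left hβ, norm_neg, norm_mul]
  have hz2 : ‖z‖ ^ 2 ≤ Q ^ 2 := by gcongr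
  rw [← Complex.lagrange_identity, norm_conj_mul_add_conj_mul_eq hQ hα, hβ']
  nlinarith [sq_nonneg ‖s₄‖]

end

/-- there is `C > 0` so that every representing section (`βs = 0`, `α^†s = 0`,
with `x ≠ 0` or `y ≠ 0`) satisfies
`|s₁| + |s₂| ≤ C · min{(|𝐱|+1)^{1/2}, (|𝐱|+1)/(|x|+|y|)} · ‖s‖_h`. -/
theorem section_component_bound_h :
    ∃ C : ℝ, 0 < C ∧ ∀ x y z s₁ s₂ s₃ s₄ : ℂ,
      (x ≠ 0 ∨ y ≠ 0) →
      (-y * s₁ + x * s₂ + z * s₄ = 0) →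
      ((starRingEnd ℂ) x *
          ((Real.sqrt (‖x‖ ^ 2 + ‖y‖ ^ 2 + ‖z‖ ^ 2 + 1))⁻¹ : ℝ) * s₁
        + (starRingEnd ℂ) y *
          ((Real.sqrt (‖x‖ ^ 2 + ‖y‖ ^ 2 + ‖z‖ ^ 2 + 1))⁻¹ : ℝ) * s₂
        + s₃ = 0) →
      ‖s₁‖ + ‖s₂‖ ≤
        C * min (Real.sqrt (Real.sqrt (‖x‖ ^ 2 + ‖y‖ ^ 2 + ‖z‖ ^ 2) + 1))
            ((Real.sqrt (‖x‖ ^ 2 + ‖y‖ ^ 2 + ‖z‖ ^ 2) + 1) /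
              (‖x‖ + ‖y‖)) *
          Real.sqrt ((‖s₁‖ ^ 2 + ‖s₂‖ ^ 2) *
              (Real.sqrt (‖x‖ ^ 2 + ‖y‖ ^ 2 + ‖z‖ ^ 2 + 1))⁻¹
            + ‖s₃‖ ^ 2 + ‖s₄‖ ^ 2) := by
  refine ⟨2, two_pos, fun x y z s₁ s₂ s₃ s₄ hxy hβ hα => ?_⟩
  set R := √(‖x‖ ^ 2 + ‖y‖ ^ 2 + ‖z‖ ^ 2)
  set Q := √(‖x‖ ^ 2 + ‖y‖ ^ 2 + ‖z‖ ^ 2 + 1)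
  show ‖s₁‖ + ‖s₂‖ ≤ 2 * min √(R + 1) ((R + 1) / (‖x‖ + ‖y‖)) * hNorm Q s₁ s₂ s₃ s₄
  have hQ : 0 < Q := Real.sqrt_pos.mpr (by positivity)
  have hQR : Q ≤ R + 1 := Real.sqrt_add_one_le (by positivity)
  have hz : ‖z‖ ≤ Q := Real.le_sqrt_of_sq_le (by linarith [sq_nonneg ‖x‖, sq_nonneg ‖y‖])
  have hS : ‖s₁‖ ^ 2 + ‖s₂‖ ^ 2 ≤ (R + 1) * hNorm Q s₁ s₂ s₃ s₄ ^ 2 :=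
    (sq_add_sq_le_mul_sq_hNorm hQ s₁ s₂ s₃ s₄).trans (by gcongr)
  have hXS : (‖x‖ ^ 2 + ‖y‖ ^ 2) * (‖s₁‖ ^ 2 + ‖s₂‖ ^ 2) ≤
      ((R + 1) * hNorm Q s₁ s₂ s₃ s₄) ^ 2 :=
    calc _ ≤ Q ^ 2 * (‖s₃‖ ^ 2 + ‖s₄‖ ^ 2) := sq_add_sq_mul_sq_add_sq_le hQ hz hβ hα
      _ ≤ ((R + 1) * hNorm Q s₁ s₂ s₃ s₄) ^ 2 := by
        rw [mul_pow]
        gcongr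
        exact sq_add_sq_le_sq_hNorm hQ.le s₁ s₂ s₃ s₄
  have hxy' : 0 < ‖x‖ + ‖y‖ := by rcases hxy with h | h <;> positivity
  rcases min_cases √(R + 1) ((R + 1) / (‖x‖ + ‖y‖)) with ⟨hmin, -⟩ | ⟨hmin, -⟩ <;> rw [hmin]
  · exact add_le_two_mul_sqrt_mul_of_sq_add_sq_le (hNorm_nonneg ..) hS
  · exact add_le_two_mul_div_mul_of_mul_sq_add_sq_le hxy' (norm_nonneg _) (norm_nonneg _)
      (by positivity) (hNorm_nonneg ..) hXS
end

section
/- Let R = ℂ[x,y,z], let E = ker(R³ → R, (f₁,f₂,f₃) ↦ xf₁+yf₂+zf₃), and consider the maps of the monad: a : R → R⁴, a(t) = (x t, y t, t, 0), and b : R⁴ → R, b(v) = -y v₁ + x v₂ + z v₄. Then b ∘ a = 0, a is injective, and the cohomology module ker(b)/im(a) is isomorphic to E as an R-module. -/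
open MvPolynomial

noncomputable def monadM : (Fin 4 → MvPolynomial (Fin 3) ℂ) →ₗ[MvPolynomial (Fin 3) ℂ]
    (Fin 3 → MvPolynomial (Fin 3) ℂ) where
  toFun v := ![v 1 - X 1 * v 2, X 0 * v 2 - v 0, v 3]
  map_add' u v := by
    funext i
    fin_cases i <;> simp [Pi.add_apply] <;> ring
  map_smul' c v := by
    funext i
    fin_cases i <;> simp [Pi.smul_apply, smul_eq_mul] <;> ring

/-- over `R = ℂ[x,y,z]`, the monad maps `a(t) = (xt, yt, t, 0)` and
`b(v) = -y v₁ + x v₂ + z v₄` satisfy `b ∘ a = 0`, `a` is injective, and the cohomology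
`ker b / im a` is isomorphic to `E = ker(R³ → R, f ↦ xf₁+yf₂+zf₃)` as an `R`-module. -/
theorem monad_cohomology_iso_koszul
    (a : MvPolynomial (Fin 3) ℂ →ₗ[MvPolynomial (Fin 3) ℂ] (Fin 4 → MvPolynomial (Fin 3) ℂ))
    (ha : ∀ t, a t = ![X 0 * t, X 1 * t, t, 0])
    (b : (Fin 4 → MvPolynomial (Fin 3) ℂ) →ₗ[MvPolynomial (Fin 3) ℂ] MvPolynomial (Fin 3) ℂ)
    (hb : ∀ v, b v = -X 1 * v 0 + X 0 * v 1 + X 2 * v 3)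
    (φ : (Fin 3 → MvPolynomial (Fin 3) ℂ) →ₗ[MvPolynomial (Fin 3) ℂ] MvPolynomial (Fin 3) ℂ)
    (hφ : ∀ f, φ f = X 0 * f 0 + X 1 * f 1 + X 2 * f 2) :
    b.comp a = 0 ∧ Function.Injective a ∧
    Nonempty ((↥(LinearMap.ker b) ⧸ (LinearMap.range a).comap (LinearMap.ker b).subtype)
      ≃ₗ[MvPolynomial (Fin 3) ℂ] ↥(LinearMap.ker φ)) := by
  refine ⟨?_, ?_, ?_⟩
  · ext t
    simp only [LinearMap.comp_apply, hb, ha, LinearMap.zero_apply]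
    simp
    ring
  · intro s t h
    have hs := congrFun (ha s) 2
    have ht := congrFun (ha t) 2
    simp at hs ht
    have : (a s) 2 = (a t) 2 := by rw [h]
    rwa [ha, ha] at this
    -- fallback
  · -- build ψ : ker b →ₗ ker φ
    have hmem : ∀ v : LinearMap.ker b, monadM v.1 ∈ LinearMap.ker φ := by
      rintro ⟨v, hv⟩
      have hv0 : -X 1 * v 0 + X 0 * v 1 + X 2 * v 3 = 0 := by
        rw [← hb v]; exact hv
      simp only [LinearMap.mem_ker, hφ, monadM]
      show X 0 * (v 1 - X 1 * v 2) + X 1 * (X 0 * v 2 - v 0) + X 2 * v 3 = 0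
      linear_combination hv0
    let ψ : LinearMap.ker b →ₗ[MvPolynomial (Fin 3) ℂ] LinearMap.ker φ :=
      (monadM.comp (LinearMap.ker b).subtype).codRestrict (LinearMap.ker φ) hmem
    have hsurj : Function.Surjective ψ := by
      rintro ⟨f, hf⟩
      have hf0 : X 0 * f 0 + X 1 * f 1 + X 2 * f 2 = 0 := by rw [← hφ f]; exact hf
      refine ⟨⟨![-(f 1), f 0, 0, f 2], ?_⟩, ?_⟩
      · rw [LinearMap.mem_ker, hb]
        show -X 1 * (-(f 1)) + X 0 * f 0 + X 2 * f 2 = 0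
        linear_combination hf0
      · apply Subtype.ext
        show monadM ![-(f 1), f 0, 0, f 2] = f
        funext i
        fin_cases i <;> simp [monadM]
    have hker : LinearMap.ker ψ = (LinearMap.range a).comap (LinearMap.ker b).subtype := by
      ext ⟨v, hv⟩
      constructor
      · intro h
        have h0 : monadM v = 0 := congrArg Subtype.val h
        have h1 : v 1 - X 1 * v 2 = 0 := congrFun h0 0
        have h2 : X 0 * v 2 - v 0 = 0 := congrFun h0 1
        have h3 : v 3 = 0 := congrFun h0 2
        refine ⟨v 2, ?_⟩
        rw [ha]
        funext i
        fin_cases i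
        · show X 0 * v 2 = v 0; linear_combination h2
        · show X 1 * v 2 = v 1; linear_combination -h1
        · rfl
        · exact h3.symm
      · rintro ⟨t, ht⟩
        apply Subtype.ext
        show monadM v = 0
        have ht' : a t = v := ht
        have hv' : v = ![X 0 * t, X 1 * t, t, 0] := by rw [← ht', ha]
        subst hv'
        funext i
        fin_cases i <;> simp [monadM]
    exact ⟨(Submodule.quotEquivOfEq _ _ hker.symm).trans (ψ.quotKerEquivOfSurjective hsurj)⟩
end
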